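/- arXiv:2404.03931 — 4 statements merged into one kernel-verified Lean document; each statement's English description precedes it below -/
import Mathlib

section
/- Let a, b ∈ A with a ≠ b and let F be a square-integrable σ(X) ∨ σ(Z)-measurable random variable. Then almost surely: (i) D_a(D_a F) = D_a F; (ii) D_a(D_b F) = D_b(D_a F); and (iii) E[ E[F | 𝒢^a] | 𝒢^b ] = E[ E[F | 𝒢^b] | 𝒢^a ]. -/
open MeasureTheory ProbabilityTheory

section Setup

variable {Ω E₀ : Type*} {A : Type*} {E : A → Type*}
variable [MeasurableSpace Ω] [MeasurableSpace E₀] [∀ a, MeasurableSpace (E a)]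

/-- The σ-algebra σ(Z) generated by the latent variable `Z`. -/
def sigmaZ (Z : Ω → E₀) : MeasurableSpace Ω :=
  MeasurableSpace.comap Z inferInstance

/-- The σ-algebra σ(X) generated by the whole family `X`. -/
def sigmaX (X : ∀ a, Ω → E a) : MeasurableSpace Ω :=
  ⨆ a, MeasurableSpace.comap (X a) inferInstance

/-- The σ-algebra σ((X_b)_{b ∈ L}) ∨ σ(Z). -/
def sigmaSub (X : ∀ a, Ω → E a) (Z : Ω → E₀) (L : Finset A) : MeasurableSpace Ω :=
  (⨆ b ∈ L, MeasurableSpace.comap (X b) inferInstance) ⊔ sigmaZ Z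

/-- The σ-algebra 𝒢^a = σ((X_b)_{b ≠ a}) ∨ σ(Z). -/
def Gminus (X : ∀ a, Ω → E a) (Z : Ω → E₀) (a : A) : MeasurableSpace Ω :=
  (⨆ b ≠ a, MeasurableSpace.comap (X b) inferInstance) ⊔ sigmaZ Z

/-- The discrete Malliavin gradient `D_a F = F - E[F | 𝒢^a]`. -/
noncomputable def Dgrad (P : Measure Ω) (X : ∀ a, Ω → E a) (Z : Ω → E₀)
    (a : A) (F : Ω → ℝ) : Ω → ℝ :=
  fun ω => F ω - (P[F | Gminus X Z a]) ω

/-- Conditional independence of the family `X` given `Z`: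
`ℙ(X_a ∈ s | 𝒢^a) = ℙ(X_a ∈ s | σ(Z))` a.s. for every `a` and measurable `s`. -/
def CondIndep (P : Measure Ω) (X : ∀ a, Ω → E a) (Z : Ω → E₀) : Prop :=
  ∀ (a : A) (s : Set (E a)), MeasurableSet s →
    (P[(X a ⁻¹' s).indicator (fun _ => (1 : ℝ)) | Gminus X Z a])
      =ᵐ[P] (P[(X a ⁻¹' s).indicator (fun _ => (1 : ℝ)) | sigmaZ Z])

/-- The random vector `X = (X_a)_{a ∈ A}`. -/
def Xvec (X : ∀ a, Ω → E a) : Ω → ∀ a, E a := fun ω a => X a ω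

/-- The difference operator `Δ^a F = f(X) - f(X^{a}, X'_a)`. -/
noncomputable def Delta [DecidableEq A] (X X' : ∀ a, Ω → E a)
    (f : (∀ a, E a) → ℝ) (a : A) : Ω → ℝ :=
  fun ω => f (Xvec X ω) - f (Function.update (Xvec X ω) a (X' a ω))

/-- The combined family of spaces indexed by `A ⊕ A`. -/
def pairFam (E : A → Type*) : A ⊕ A → Type _ := Sum.elim E E

instance pairFamMS : ∀ s, MeasurableSpace (pairFam E s)
  | .inl a => inferInstanceAs (MeasurableSpace (E a))
  | .inr a => inferInstanceAs (MeasurableSpace (E a))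

/-- The combined family `(X, X')` indexed by `A ⊕ A`. -/
def pairX (X X' : ∀ a, Ω → E a) : ∀ s, Ω → pairFam E s
  | .inl a => X a
  | .inr a => X' a

/-- `X'_a` has the same conditional distribution given `Z` as `X_a`, for each `a`. -/
def SameCondLaw (P : Measure Ω) (X X' : ∀ a, Ω → E a) (Z : Ω → E₀) : Prop :=
  ∀ (a : A) (s : Set (E a)), MeasurableSet s →
    (P[(X a ⁻¹' s).indicator (fun _ => (1 : ℝ)) | sigmaZ Z])
      =ᵐ[P] (P[(X' a ⁻¹' s).indicator (fun _ => (1 : ℝ)) | sigmaZ Z])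

/-- The carré du champ operator
`Γ(F,G) = (1/2) ∑_a E[(Δ^a F)(Δ^a G) | σ(X) ∨ σ(Z)]` (finite index set). -/
noncomputable def Gamma [Fintype A] [DecidableEq A] (P : Measure Ω)
    (X X' : ∀ a, Ω → E a) (Z : Ω → E₀) (f g : (∀ a, E a) → ℝ) : Ω → ℝ :=
  fun ω => (1/2) * ∑ a,
    (P[fun ω' => Delta X X' f a ω' * Delta X X' g a ω' | sigmaX X ⊔ sigmaZ Z]) ω

end Setup

/-!
Write `𝒢^{ab} = σ((X_c)_{c ∉ {a, b}}) ∨ σ(Z)`, so that `𝒢^b = σ(X_a) ∨ 𝒢^{ab}` and `𝒢^{ab} ⊆ 𝒢^a`.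
By conditional independence, `E[1_{X_a ∈ s} | 𝒢^a] = E[1_{X_a ∈ s} | σ(Z)]` is `𝒢^{ab}`-measurable,
and a π-λ argument on the sets `{X_a ∈ s} ∩ U`, `U ∈ 𝒢^{ab}`, upgrades this to
`E[G | 𝒢^b] = E[G | 𝒢^{ab}]` for every integrable `𝒢^a`-measurable `G`. Hence both sides of (iii)
equal `E[F | 𝒢^{ab}]`, and (i), (ii) follow from (iii) and the tower property.
-/

theorem IsPiSystem.image2_inter {α : Type*} {C D : Set (Set α)} (hC : IsPiSystem C)
    (hD : IsPiSystem D) : IsPiSystem (Set.image2 (· ∩ ·) C D) := by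
  rintro _ ⟨s, hs, t, ht, rfl⟩ _ ⟨s', hs', t', ht', rfl⟩ hne
  have hst : s ∩ t ∩ (s' ∩ t') = s ∩ s' ∩ (t ∩ t') := Set.inter_inter_inter_comm s t s' t'
  rw [hst] at hne ⊢
  exact Set.mem_image2_of_mem (hC s hs s' hs' (hne.mono Set.inter_subset_left))
    (hD t ht t' ht' (hne.mono Set.inter_subset_right))

theorem MeasurableSpace.sup_eq_generateFrom_image2_inter {α : Type*} (m₁ m₂ : MeasurableSpace α) :
    m₁ ⊔ m₂ = generateFrom
      (Set.image2 (· ∩ ·) {s | MeasurableSet[m₁] s} {t | MeasurableSet[m₂] t}) := by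
  refine le_antisymm (sup_le (fun s hs => ?_) (fun t ht => ?_)) (generateFrom_le ?_)
  · exact measurableSet_generateFrom ⟨s, hs, Set.univ, MeasurableSet.univ, Set.inter_univ s⟩
  · exact measurableSet_generateFrom ⟨Set.univ, MeasurableSet.univ, t, ht, Set.univ_inter t⟩
  · rintro _ ⟨s, hs, t, ht, rfl⟩
    exact (le_sup_left (b := m₂) s hs).inter (le_sup_right (a := m₁) t ht)

section ConditionalExpectation

variable {Ω : Type*} {m m₁ m₂ mΩ : MeasurableSpace Ω} {μ : Measure Ω}

theorem setIntegral_eq_of_isPiSystem {S : Set (Set Ω)} (hm : m ≤ mΩ)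
    (hgen : m = MeasurableSpace.generateFrom S) (hS : IsPiSystem S) {f g : Ω → ℝ}
    (hf : Integrable f μ) (hg : Integrable g μ) (huniv : ∫ x, f x ∂μ = ∫ x, g x ∂μ)
    (hSeq : ∀ s ∈ S, ∫ x in s, f x ∂μ = ∫ x in s, g x ∂μ) {s : Set Ω} (hs : MeasurableSet[m] s) :
    ∫ x in s, f x ∂μ = ∫ x in s, g x ∂μ := by
  induction s, hs using MeasurableSpace.induction_on_inter hgen hS with
  | empty => simp
  | basic s hs => exact hSeq s hs
  | compl s hs ih =>
    have hf' := integral_add_compl (hm s hs) hf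
    have hg' := integral_add_compl (hm s hs) hg
    linarith
  | iUnion s hdisj hs ih =>
    rw [integral_iUnion (fun i => hm _ (hs i)) hdisj hf.integrableOn,
      integral_iUnion (fun i => hm _ (hs i)) hdisj hg.integrableOn]
    exact tsum_congr ih

theorem integral_mul_condExp (hm : m ≤ mΩ) [SigmaFinite (μ.trim hm)] {f g : Ω → ℝ}
    (hg : AEStronglyMeasurable[m] g μ) (hgf : Integrable (g * f) μ) (hf : Integrable f μ) :
    ∫ x, (g * μ[f | m]) x ∂μ = ∫ x, (g * f) x ∂μ := by
  rw [← integral_condExp hm (f := g * f)]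
  exact integral_congr_ae (condExp_mul_of_aestronglyMeasurable_left hg hgf hf).symm

theorem integral_condExp_indicator_mul (hm : m ≤ mΩ) [IsFiniteMeasure μ] {t : Set Ω}
    (ht : MeasurableSet t) {g : Ω → ℝ} (hg : AEStronglyMeasurable[m] g μ) (hgi : Integrable g μ) :
    ∫ x, (μ[t.indicator (fun _ => (1 : ℝ)) | m] * g) x ∂μ = ∫ x in t, g x ∂μ := by
  have htg : t.indicator (fun _ => (1 : ℝ)) * g = t.indicator g := by
    ext x; by_cases hx : x ∈ t <;> simp [hx]
  rw [← integral_indicator ht, ← htg,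
    ← integral_condExp hm (f := t.indicator (fun _ => (1 : ℝ)) * g)]
  refine integral_congr_ae (condExp_mul_of_aestronglyMeasurable_right hg ?_ ?_).symm
  · exact htg ▸ hgi.indicator ht
  · exact (integrable_const 1).indicator ht

/-- `hind` says that `m₁` and `m₂` are conditionally independent given `m`. -/
theorem condExp_sup_ae_eq_condExp [IsFiniteMeasure μ] (hm₁ : m₁ ≤ mΩ) (hm₂ : m₂ ≤ mΩ)
    (hm : m ≤ m₂) (hind : ∀ t, MeasurableSet[m₁] t →
      AEStronglyMeasurable[m] (μ[t.indicator (fun _ => (1 : ℝ)) | m₂]) μ)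
    {G : Ω → ℝ} (hG : StronglyMeasurable[m₂] G) (hGi : Integrable G μ) :
    μ[G | m₁ ⊔ m] =ᵐ[μ] μ[G | m] := by
  have hmΩ : m ≤ mΩ := hm.trans hm₂
  have hsup : m₁ ⊔ m ≤ mΩ := sup_le hm₁ hmΩ
  refine (ae_eq_condExp_of_forall_setIntegral_eq hsup hGi
    (fun s _ _ => integrable_condExp.integrableOn) (fun s hs _ => ?_)
    (stronglyMeasurable_condExp.mono (le_sup_right : m ≤ m₁ ⊔ m)).aestronglyMeasurable).symm
  refine setIntegral_eq_of_isPiSystem hsup (MeasurableSpace.sup_eq_generateFrom_image2_inter m₁ m)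
    ((@MeasurableSpace.isPiSystem_measurableSet _ m₁).image2_inter
      (@MeasurableSpace.isPiSystem_measurableSet _ m))
    integrable_condExp hGi (integral_condExp hmΩ) ?_ hs
  rintro _ ⟨t, ht, u, hu, rfl⟩
  set q := μ[t.indicator (fun _ => (1 : ℝ)) | m₂]
  have hq : q =ᵐ[μ] μ[t.indicator (fun _ => (1 : ℝ)) | m] :=
    (condExp_of_aestronglyMeasurable' hmΩ (hind t ht) integrable_condExp).symm.trans
      (condExp_condExp_of_le hm hm₂)
  have hq_le : ∀ᵐ x ∂μ, ‖q x‖ ≤ 1 := by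
    refine ae_bdd_abs_condExp_of_ae_bdd_abs (ae_of_all _ fun x => ?_)
    by_cases hx : x ∈ t <;> simp [hx]
  have hK : StronglyMeasurable[m₂] (u.indicator G) := hG.indicator (hm u hu)
  have hKi : Integrable (u.indicator G) μ := hGi.indicator (hmΩ u hu)
  calc ∫ x in t ∩ u, μ[G | m] x ∂μ = ∫ x in t, μ[u.indicator G | m] x ∂μ := by
        rw [← setIntegral_indicator (hmΩ u hu)]
        exact integral_congr_ae (ae_restrict_of_ae (condExp_indicator hGi hu).symm)
    _ = ∫ x, (μ[t.indicator (fun _ => (1 : ℝ)) | m] * μ[u.indicator G | m]) x ∂μ :=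
        (integral_condExp_indicator_mul hmΩ (hm₁ t ht)
          stronglyMeasurable_condExp.aestronglyMeasurable integrable_condExp).symm
    _ = ∫ x, (q * μ[u.indicator G | m]) x ∂μ :=
        integral_congr_ae (by filter_upwards [hq] with x hx; simp only [Pi.mul_apply, hx])
    _ = ∫ x, (q * u.indicator G) x ∂μ := integral_mul_condExp hmΩ (hind t ht)
        (hKi.bdd_mul (stronglyMeasurable_condExp.mono hm₂).aestronglyMeasurable hq_le) hKi
    _ = ∫ x in t, u.indicator G x ∂μ :=
        integral_condExp_indicator_mul hm₂ (hm₁ t ht) hK.aestronglyMeasurable hKi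
    _ = ∫ x in t ∩ u, G x ∂μ := setIntegral_indicator (hmΩ u hu)

theorem sub_condExp_sub_condExp_self (hm : m ≤ mΩ) [SigmaFinite (μ.trim hm)] {F : Ω → ℝ}
    (hF : Integrable F μ) : F - μ[F | m] - μ[F - μ[F | m] | m] =ᵐ[μ] F - μ[F | m] := by
  filter_upwards [condExp_sub hF integrable_condExp m, condExp_condExp_of_le (f := F) le_rfl hm]
    with x hsub htower
  simp only [Pi.sub_apply] at hsub htower ⊢
  rw [hsub, htower, sub_self, sub_zero]

theorem sub_condExp_comm {F : Ω → ℝ} (hF : Integrable F μ)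
    (hcomm : μ[μ[F | m₁] | m₂] =ᵐ[μ] μ[μ[F | m₂] | m₁]) :
    F - μ[F | m₂] - μ[F - μ[F | m₂] | m₁] =ᵐ[μ] F - μ[F | m₁] - μ[F - μ[F | m₁] | m₂] := by
  filter_upwards [condExp_sub hF integrable_condExp m₁, condExp_sub hF integrable_condExp m₂,
    hcomm] with x hsub₁ hsub₂ hcommx
  simp only [Pi.sub_apply] at hsub₁ hsub₂ hcommx ⊢
  rw [hsub₁, hsub₂, hcommx]
  ring

end ConditionalExpectation

section Gradient

variable {Ω E₀ A : Type*} {E : A → Type*} [MeasurableSpace E₀] [∀ a, MeasurableSpace (E a)]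
  {X : ∀ a, Ω → E a} {Z : Ω → E₀}

def GminusPair (X : ∀ a, Ω → E a) (Z : Ω → E₀) (a b : A) : MeasurableSpace Ω :=
  (⨆ c ∉ ({a, b} : Set A), MeasurableSpace.comap (X c) inferInstance) ⊔ sigmaZ Z

theorem GminusPair_comm (a b : A) : GminusPair X Z a b = GminusPair X Z b a := by
  simp only [GminusPair, Set.pair_comm]

theorem GminusPair_le_Gminus (a b : A) : GminusPair X Z a b ≤ Gminus X Z a :=
  sup_le_sup_right (biSup_mono fun _ hc hca => hc (Or.inl hca)) _

theorem Gminus_eq_comap_sup_GminusPair {a b : A} (hab : a ≠ b) :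
    Gminus X Z b = MeasurableSpace.comap (X a) inferInstance ⊔ GminusPair X Z a b := by
  refine le_antisymm (sup_le (iSup₂_le fun c hcb => ?_) (le_sup_of_le_right le_sup_right))
    (sup_le (le_sup_of_le_left (le_iSup₂_of_le a hab le_rfl)) ?_)
  · by_cases hca : c = a
    · subst hca
      exact le_sup_left
    · refine le_sup_of_le_right (le_sup_of_le_left (le_iSup₂_of_le c ?_ le_rfl))
      simp [hca, hcb]
  · rw [GminusPair_comm]
    exact GminusPair_le_Gminus b a

variable [MeasurableSpace Ω] {P : Measure Ω}

theorem Gminus_le (hX : ∀ a, Measurable (X a)) (hZ : Measurable Z) (a : A) :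
    Gminus X Z a ≤ ‹MeasurableSpace Ω› :=
  sup_le (iSup₂_le fun c _ => (hX c).comap_le) hZ.comap_le

theorem aestronglyMeasurable_condExp_indicator_Gminus (hCI : CondIndep P X Z) (a b : A)
    {t : Set Ω} (ht : MeasurableSet[MeasurableSpace.comap (X a) inferInstance] t) :
    AEStronglyMeasurable[GminusPair X Z a b]
      (P[t.indicator (fun _ => (1 : ℝ)) | Gminus X Z a]) P := by
  obtain ⟨s, hs, rfl⟩ := ht
  have hZ_le : sigmaZ Z ≤ GminusPair X Z a b := le_sup_right
  exact (stronglyMeasurable_condExp.mono hZ_le).aestronglyMeasurable.congr (hCI a s hs).symm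

theorem condExp_Gminus_ae_eq_condExp_GminusPair [IsFiniteMeasure P]
    (hX : ∀ a, Measurable (X a)) (hZ : Measurable Z) (hCI : CondIndep P X Z) {a b : A}
    (hab : a ≠ b) {G : Ω → ℝ} (hG : StronglyMeasurable[Gminus X Z a] G) (hGi : Integrable G P) :
    P[G | Gminus X Z b] =ᵐ[P] P[G | GminusPair X Z a b] := by
  rw [Gminus_eq_comap_sup_GminusPair hab]
  exact condExp_sup_ae_eq_condExp (hX a).comap_le (Gminus_le hX hZ a) (GminusPair_le_Gminus a b)
    (fun _ => aestronglyMeasurable_condExp_indicator_Gminus hCI a b) hG hGi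

theorem condExp_condExp_Gminus_ae_eq_condExp_GminusPair [IsFiniteMeasure P]
    (hX : ∀ a, Measurable (X a)) (hZ : Measurable Z) (hCI : CondIndep P X Z) {a b : A}
    (hab : a ≠ b) (F : Ω → ℝ) :
    P[P[F | Gminus X Z a] | Gminus X Z b] =ᵐ[P] P[F | GminusPair X Z a b] :=
  (condExp_Gminus_ae_eq_condExp_GminusPair hX hZ hCI hab stronglyMeasurable_condExp
    integrable_condExp).trans (condExp_condExp_of_le (GminusPair_le_Gminus a b) (Gminus_le hX hZ a))

theorem condExp_condExp_Gminus_comm [IsFiniteMeasure P]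
    (hX : ∀ a, Measurable (X a)) (hZ : Measurable Z) (hCI : CondIndep P X Z) {a b : A}
    (hab : a ≠ b) (F : Ω → ℝ) :
    P[P[F | Gminus X Z a] | Gminus X Z b] =ᵐ[P] P[P[F | Gminus X Z b] | Gminus X Z a] := by
  have hba := condExp_condExp_Gminus_ae_eq_condExp_GminusPair hX hZ hCI hab.symm F
  rw [GminusPair_comm] at hba
  exact (condExp_condExp_Gminus_ae_eq_condExp_GminusPair hX hZ hCI hab F).trans hba.symm

theorem Dgrad_eq (P : Measure Ω) (X : ∀ a, Ω → E a) (Z : Ω → E₀) (a : A) (F : Ω → ℝ) :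
    Dgrad P X Z a F = F - P[F | Gminus X Z a] := rfl

end Gradient

theorem gradient_commutation_general
    {Ω E₀ : Type*} {A : Type*} {E : A → Type*}
    [MeasurableSpace Ω] [MeasurableSpace E₀] [∀ a, MeasurableSpace (E a)]
    (P : Measure Ω) [IsProbabilityMeasure P]
    (Z : Ω → E₀) (hZ : Measurable Z)
    (X : ∀ a, Ω → E a) (hX : ∀ a, Measurable (X a))
    (hCI : CondIndep P X Z)
    (a b : A) (hab : a ≠ b)
    (F : Ω → ℝ) (hF : MemLp F 2 P) :
    (Dgrad P X Z a (Dgrad P X Z a F) =ᵐ[P] Dgrad P X Z a F)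
    ∧ (Dgrad P X Z a (Dgrad P X Z b F) =ᵐ[P] Dgrad P X Z b (Dgrad P X Z a F))
    ∧ (P[P[F | Gminus X Z a] | Gminus X Z b]
        =ᵐ[P] P[P[F | Gminus X Z b] | Gminus X Z a]) := by
  have hFi : Integrable F P := hF.integrable one_le_two
  have hcomm := condExp_condExp_Gminus_comm hX hZ hCI hab F
  simp only [Dgrad_eq]
  exact ⟨sub_condExp_sub_condExp_self (Gminus_le hX hZ a) hFi, sub_condExp_comm hFi hcomm,
    hcomm⟩

/-- commutation properties of the discrete gradient. -/
theorem gradient_commutation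
    {Ω E₀ : Type*} {A : Type*} {E : A → Type*}
    [MeasurableSpace Ω] [MeasurableSpace E₀] [∀ a, MeasurableSpace (E a)]
    [StandardBorelSpace E₀] [∀ a, StandardBorelSpace (E a)] [Countable A]
    (P : Measure Ω) [IsProbabilityMeasure P]
    (Z : Ω → E₀) (hZ : Measurable Z)
    (X : ∀ a, Ω → E a) (hX : ∀ a, Measurable (X a))
    (hCI : CondIndep P X Z)
    (a b : A) (hab : a ≠ b)
    (F : Ω → ℝ) (hF : MemLp F 2 P)
    (hFmeas : Measurable[sigmaX X ⊔ sigmaZ Z] F) :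
    (Dgrad P X Z a (Dgrad P X Z a F) =ᵐ[P] Dgrad P X Z a F)
    ∧ (Dgrad P X Z a (Dgrad P X Z b F) =ᵐ[P] Dgrad P X Z b (Dgrad P X Z a F))
    ∧ (P[P[F | Gminus X Z a] | Gminus X Z b]
        =ᵐ[P] P[P[F | Gminus X Z b] | Gminus X Z a]) :=
  gradient_commutation_general P Z hZ X hX hCI a b hab F hF
end

section
/- Let F be a square-integrable σ(X) ∨ σ(Z)-measurable random variable such that the series ∑_{a∈A} D_a F converges in L²(ℙ). Then for every λ > 0, λ · ‖F‖_{L²} ≤ ‖λ F + ∑_{a∈A} D_a F‖_{L²}; that is, the Ornstein–Uhlenbeck operator L F = −∑_{a∈A} D_a F is dissipative on L². -/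
open MeasureTheory ProbabilityTheory

/-!
Since conditional expectation is a contraction of `L²`, Cauchy–Schwarz gives
`⟪F, D_a F⟫ = ‖F‖² - ⟪F, E[F | 𝒢^a]⟫ ≥ 0` for every `a`. Passing to the `L²` limit `S` of the
partial sums yields `⟪F, S⟫ ≥ 0`, hence `λ‖F‖² ≤ ⟪F, λF + S⟫ ≤ ‖F‖ ‖λF + S‖`.
-/

open Filter Topology
open scoped RealInnerProductSpace

section InnerProductSpace

variable {H : Type*} [NormedAddCommGroup H] [InnerProductSpace ℝ H]

theorem real_inner_sub_nonneg_of_norm_le {x y : H} (h : ‖y‖ ≤ ‖x‖) : 0 ≤ ⟪x, x - y⟫ := by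
  rw [inner_sub_right, real_inner_self_eq_norm_sq]
  nlinarith [real_inner_le_norm x y, norm_nonneg x, norm_nonneg y]

theorem HasSum.real_inner_nonneg {ι : Type*} {x s : H} {d : ι → H} (hs : HasSum d s)
    (hd : ∀ i, 0 ≤ ⟪x, d i⟫) : 0 ≤ ⟪x, s⟫ :=
  (hs.mapL (innerSL ℝ x)).nonneg hd

theorem mul_norm_le_norm_smul_add_of_real_inner_nonneg {x y : H} (c : ℝ)
    (hxy : 0 ≤ ⟪x, y⟫) : c * ‖x‖ ≤ ‖c • x + y‖ := by
  have key : c * ‖x‖ ^ 2 ≤ ‖x‖ * ‖c • x + y‖ :=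
    calc c * ‖x‖ ^ 2 ≤ c * ⟪x, x⟫ + ⟪x, y⟫ := by rw [real_inner_self_eq_norm_sq]; linarith
      _ = ⟪x, c • x + y⟫ := by rw [inner_add_right, real_inner_smul_right]
      _ ≤ ‖x‖ * ‖c • x + y‖ := real_inner_le_norm _ _
  rcases (norm_nonneg x).eq_or_lt' with hx | hx
  · rw [hx, mul_zero]; exact norm_nonneg _
  · nlinarith

end InnerProductSpace

namespace MeasureTheory

section Lp

variable {α E : Type*} [MeasurableSpace α] {μ : Measure α} {p : ENNReal} [NormedAddCommGroup E]

theorem MemLp.toLp_finsetSum {ι : Type*} (t : Finset ι) {f : ι → α → E}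
    (hf : ∀ i, MemLp (f i) p μ) :
    (memLp_finsetSum' t fun i _ => hf i).toLp (∑ i ∈ t, f i) = ∑ i ∈ t, (hf i).toLp (f i) := by
  classical
  induction t using Finset.induction with
  | empty => rfl
  | insert i t hi ih => simp only [Finset.sum_insert hi, ← ih]; rfl

theorem MemLp.hasSum_toLp_of_tendsto_eLpNorm [Fact (1 ≤ p)] {ι : Type*} {f : ι → α → E}
    (hf : ∀ i, MemLp (f i) p μ) {s : α → E} (hs : MemLp s p μ)
    (h : Tendsto (fun t : Finset ι => eLpNorm ((∑ i ∈ t, f i) - s) p μ) atTop (𝓝 0)) :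
    HasSum (fun i => (hf i).toLp (f i)) (hs.toLp s) := by
  refine ((Lp.tendsto_Lp_iff_tendsto_eLpNorm'' (fun t => ∑ i ∈ t, f i)
    (fun t => memLp_finsetSum' t fun i _ => hf i) s hs).2 h).congr fun t => ?_
  exact MemLp.toLp_finsetSum t hf

end Lp

theorem real_inner_toLp_sub_condExp_nonneg {α : Type*} {m m₀ : MeasurableSpace α}
    {μ : Measure α} {f : α → ℝ} (hf : MemLp f 2 μ) :
    0 ≤ ⟪hf.toLp f, (hf.sub (hf.condExp (m := m) one_le_two)).toLp (f - μ[f | m])⟫ := by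
  rw [MemLp.toLp_sub hf (hf.condExp one_le_two)]
  refine real_inner_sub_nonneg_of_norm_le ?_
  simp only [Lp.norm_toLp]
  exact ENNReal.toReal_mono hf.eLpNorm_ne_top (eLpNorm_condExp_le_eLpNorm f one_le_two)

end MeasureTheory

open MeasureTheory

theorem OU_dissipative_general
    {Ω E₀ : Type*} {A : Type*} {E : A → Type*}
    [MeasurableSpace Ω] [MeasurableSpace E₀] [∀ a, MeasurableSpace (E a)]
    (P : Measure Ω)
    (Z : Ω → E₀)
    (X : ∀ a, Ω → E a)
    (F : Ω → ℝ) (hF : MemLp F 2 P)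
    -- the series `∑_a D_a F` converges in `L²` to `S`
    (S : Ω → ℝ) (hS : MemLp S 2 P)
    (hconv : Filter.Tendsto
      (fun s : Finset A => eLpNorm ((∑ a ∈ s, Dgrad P X Z a F) - S) 2 P)
      Filter.atTop (nhds 0)) :
    ∀ lam : ℝ, 0 < lam →
      ENNReal.ofReal lam * eLpNorm F 2 P ≤ eLpNorm (fun ω => lam * F ω + S ω) 2 P := by
  intro lam hlam
  have hD : ∀ a, MemLp (Dgrad P X Z a F) 2 P := fun a => hF.sub (hF.condExp one_le_two)
  have hsum := MemLp.hasSum_toLp_of_tendsto_eLpNorm hD hS hconv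
  have hinner : 0 ≤ ⟪hF.toLp F, hS.toLp S⟫ :=
    hsum.real_inner_nonneg fun a => real_inner_toLp_sub_condExp_nonneg hF
  have hnorm := mul_norm_le_norm_smul_add_of_real_inner_nonneg lam hinner
  rw [← MemLp.toLp_const_smul, ← MemLp.toLp_add] at hnorm
  change _ ≤ eLpNorm (lam • F + S) 2 P
  rw [← Lp.enorm_toLp hF, ← Lp.enorm_toLp ((hF.const_smul lam).add hS), ← ofReal_norm,
    ← ofReal_norm, ← ENNReal.ofReal_mul hlam.le]
  exact ENNReal.ofReal_le_ofReal hnorm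

/-- the Ornstein–Uhlenbeck operator `L F = -∑_a D_a F` is dissipative on `L²`. -/
theorem OU_dissipative
    {Ω E₀ : Type*} {A : Type*} {E : A → Type*}
    [MeasurableSpace Ω] [MeasurableSpace E₀] [∀ a, MeasurableSpace (E a)]
    [StandardBorelSpace E₀] [∀ a, StandardBorelSpace (E a)] [Countable A]
    (P : Measure Ω) [IsProbabilityMeasure P]
    (Z : Ω → E₀) (hZ : Measurable Z)
    (X : ∀ a, Ω → E a) (hX : ∀ a, Measurable (X a))
    (hCI : CondIndep P X Z)
    (F : Ω → ℝ) (hF : MemLp F 2 P)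
    (hFmeas : Measurable[sigmaX X ⊔ sigmaZ Z] F)
    -- the series `∑_a D_a F` converges in `L²` to `S`
    (S : Ω → ℝ) (hS : MemLp S 2 P)
    (hconv : Filter.Tendsto
      (fun s : Finset A => eLpNorm ((∑ a ∈ s, Dgrad P X Z a F) - S) 2 P)
      Filter.atTop (nhds 0)) :
    ∀ lam : ℝ, 0 < lam →
      ENNReal.ofReal lam * eLpNorm F 2 P ≤ eLpNorm (fun ω => lam * F ω + S ω) 2 P :=
  OU_dissipative_general P Z X F hF S hS hconv
end

section
/- Let p ≥ 1 and let F be a square-integrable σ(X) ∨ σ(Z)-measurable random variable such that ∑_{a∈A} D_a F converges in L² and equals p·F almost surely. Then E[F | Z] = 0 almost surely, E[F] = 0, and Var(F) = (1/p) ∑_{a∈A} E[(D_a F)²]. -/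
/-!
Every `D_a F = F - E[F | 𝒢^a]` has zero conditional expectation given `𝒢^a`, hence, by the
tower property, given `σ(Z) ≤ 𝒢^a`. Conditional expectation is an `L¹`-contraction, so the
`L²`-limit `p • F = ∑_a D_a F` also has zero conditional expectation given `σ(Z)`.
For the variance, `D_a F` is orthogonal to `L²(𝒢^a) ∋ E[F | 𝒢^a]`, so `E[F D_a F] = E[(D_a F)²]`;
pairing the `L²`-convergent series with `F` gives `p E[F²] = ∑_a E[(D_a F)²]`.
-/

open MeasureTheory ProbabilityTheory

open Filter Topology

namespace MeasureTheory

variable {α : Type*} {m m' m0 : MeasurableSpace α} {μ : Measure α}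

lemma condExp_sub_condExp_ae_eq_zero (hm' : m' ≤ m) (hm : m ≤ m0)
    [SigmaFinite (μ.trim hm)] {f : α → ℝ} (hf : Integrable f μ) :
    μ[f - μ[f | m] | m'] =ᵐ[μ] 0 := by
  filter_upwards [condExp_sub hf (integrable_condExp (m := m) (f := f)) m',
    condExp_condExp_of_le (f := f) hm' hm] with x hsub htower
  simp [hsub, htower]

lemma integral_condExp_mul_sub_condExp [IsFiniteMeasure μ] (hm : m ≤ m0) {f : α → ℝ}
    (hf : MemLp f 2 μ) : ∫ x, (μ[f | m] * (f - μ[f | m])) x ∂μ = 0 := by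
  have hg : MemLp (f - μ[f | m]) 2 μ := hf.sub (hf.condExp one_le_two)
  have hpull : μ[μ[f | m] * (f - μ[f | m]) | m] =ᵐ[μ] μ[f | m] * μ[f - μ[f | m] | m] :=
    condExp_mul_of_stronglyMeasurable_left stronglyMeasurable_condExp
      ((hf.condExp one_le_two).integrable_mul hg) (hg.integrable one_le_two)
  have hzero : μ[μ[f | m] * (f - μ[f | m]) | m] =ᵐ[μ] 0 := by
    filter_upwards [hpull, condExp_sub_condExp_ae_eq_zero le_rfl hm
      (hf.integrable one_le_two)] with x h1 h2
    simp [h1, h2]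
  rw [← integral_condExp hm, integral_congr_ae hzero, Pi.zero_def, integral_zero]

lemma integral_mul_sub_condExp [IsFiniteMeasure μ] (hm : m ≤ m0) {f : α → ℝ}
    (hf : MemLp f 2 μ) :
    ∫ x, f x * (f - μ[f | m]) x ∂μ = ∫ x, (f - μ[f | m]) x ^ 2 ∂μ := by
  have hg : MemLp (f - μ[f | m]) 2 μ := hf.sub (hf.condExp one_le_two)
  calc ∫ x, f x * (f - μ[f | m]) x ∂μ
      = ∫ x, ((f - μ[f | m]) x ^ 2 + (μ[f | m] * (f - μ[f | m])) x) ∂μ := by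
        congr 1; ext x; simp only [Pi.sub_apply, Pi.mul_apply]; ring
    _ = ∫ x, (f - μ[f | m]) x ^ 2 ∂μ := by
        rw [integral_add hg.integrable_sq ((hf.condExp one_le_two).integrable_mul hg),
          integral_condExp_mul_sub_condExp hm hf, add_zero]

lemma condExp_ae_eq_zero_of_tendsto_eLpNorm {ι : Type*} {l : Filter ι} [l.NeBot]
    {G : ι → α → ℝ} {S : α → ℝ} (hG : ∀ i, Integrable (G i) μ) (hS : Integrable S μ)
    (hGm : ∀ i, μ[G i | m] =ᵐ[μ] 0)
    (hlim : Tendsto (fun i => eLpNorm (G i - S) 1 μ) l (𝓝 0)) :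
    μ[S | m] =ᵐ[μ] 0 := by
  have hbound : ∀ i, eLpNorm (μ[S | m]) 1 μ ≤ eLpNorm (G i - S) 1 μ := fun i => by
    have hS_eq : μ[S | m] =ᵐ[μ] -μ[G i - S | m] := by
      filter_upwards [condExp_sub (hG i) hS m, hGm i] with x h1 h2
      simp [h1, h2]
    rw [eLpNorm_congr_ae hS_eq, eLpNorm_neg]
    exact eLpNorm_condExp_le_eLpNorm _ le_rfl
  have hnorm : eLpNorm (μ[S | m]) 1 μ = 0 :=
    le_antisymm (ge_of_tendsto hlim (Eventually.of_forall hbound)) zero_le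
  exact (eLpNorm_eq_zero_iff integrable_condExp.aestronglyMeasurable one_ne_zero).1 hnorm

lemma tendsto_eLpNorm_of_exponent_le [IsProbabilityMeasure μ] {ι : Type*} {l : Filter ι}
    {p q : ENNReal} (hpq : p ≤ q) {G : ι → α → ℝ} (hG : ∀ i, AEStronglyMeasurable (G i) μ)
    (hlim : Tendsto (fun i => eLpNorm (G i) q μ) l (𝓝 0)) :
    Tendsto (fun i => eLpNorm (G i) p μ) l (𝓝 0) :=
  tendsto_of_tendsto_of_tendsto_of_le_of_le tendsto_const_nhds hlim (fun _ => zero_le)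
    fun i => eLpNorm_le_eLpNorm_of_exponent_le hpq (hG i)

lemma tendsto_integral_mul_of_tendsto_eLpNorm {ι : Type*} {l : Filter ι}
    {f S : α → ℝ} {G : ι → α → ℝ} (hf : MemLp f 2 μ) (hG : ∀ i, MemLp (G i) 2 μ)
    (hS : MemLp S 2 μ) (hlim : Tendsto (fun i => eLpNorm (G i - S) 2 μ) l (𝓝 0)) :
    Tendsto (fun i => ∫ x, f x * G i x ∂μ) l (𝓝 (∫ x, f x * S x ∂μ)) := by
  rw [tendsto_iff_edist_tendsto_0]
  have hbound : ∀ i, edist (∫ x, f x * G i x ∂μ) (∫ x, f x * S x ∂μ)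
      ≤ eLpNorm f 2 μ * eLpNorm (G i - S) 2 μ := fun i => by
    have hfG : Integrable (fun x => f x * G i x) μ := hf.integrable_mul (hG i)
    have hfS : Integrable (fun x => f x * S x) μ := hf.integrable_mul hS
    rw [edist_eq_enorm_sub, ← integral_sub hfG hfS]
    calc ‖∫ x, (f x * G i x - f x * S x) ∂μ‖ₑ
        ≤ eLpNorm (f • (G i - S)) 1 μ := by
          rw [eLpNorm_one_eq_lintegral_enorm]
          refine (enorm_integral_le_lintegral_enorm _).trans_eq ?_
          congr 1; ext x; simp [mul_sub]
      _ ≤ eLpNorm f 2 μ * eLpNorm (G i - S) 2 μ :=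
          eLpNorm_smul_le_mul_eLpNorm ((hG i).sub hS).1 hf.1
  have hprod : Tendsto (fun i => eLpNorm f 2 μ * eLpNorm (G i - S) 2 μ) l (𝓝 0) := by
    simpa using ENNReal.Tendsto.const_mul hlim (Or.inr hf.eLpNorm_ne_top)
  exact tendsto_of_tendsto_of_tendsto_of_le_of_le tendsto_const_nhds hprod
    (fun _ => zero_le) hbound

lemma hasSum_integral_mul_of_tendsto_eLpNorm {ι : Type*} {f S : α → ℝ} {g : ι → α → ℝ}
    (hf : MemLp f 2 μ) (hg : ∀ i, MemLp (g i) 2 μ) (hS : MemLp S 2 μ)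
    (hlim : Tendsto (fun s : Finset ι => eLpNorm ((∑ i ∈ s, g i) - S) 2 μ) atTop (𝓝 0)) :
    HasSum (fun i => ∫ x, f x * g i x ∂μ) (∫ x, f x * S x ∂μ) := by
  refine (tendsto_integral_mul_of_tendsto_eLpNorm hf
    (fun s => memLp_finsetSum' s fun i _ => hg i) hS hlim).congr fun s => ?_
  simp only [Finset.sum_apply, Finset.mul_sum]
  exact integral_finsetSum s fun i _ => hf.integrable_mul (hg i)

lemma condExp_ae_eq_zero_of_tendsto_eLpNorm_finsetSum [IsProbabilityMeasure μ] {ι : Type*}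
    {g : ι → α → ℝ} {S : α → ℝ} (hg : ∀ i, MemLp (g i) 2 μ) (hS : MemLp S 2 μ)
    (hgm : ∀ i, μ[g i | m] =ᵐ[μ] 0)
    (hlim : Tendsto (fun s : Finset ι => eLpNorm ((∑ i ∈ s, g i) - S) 2 μ) atTop (𝓝 0)) :
    μ[S | m] =ᵐ[μ] 0 := by
  have hsum : ∀ s : Finset ι, MemLp (∑ i ∈ s, g i) 2 μ := fun s =>
    memLp_finsetSum' s fun i _ => hg i
  refine condExp_ae_eq_zero_of_tendsto_eLpNorm (fun s => (hsum s).integrable one_le_two)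
    (hS.integrable one_le_two) (fun s => ?_)
    (tendsto_eLpNorm_of_exponent_le one_le_two (fun s => ((hsum s).sub hS).1) hlim)
  refine (condExp_finsetSum (fun i _ => (hg i).integrable one_le_two) m).trans ?_
  simpa using eventuallyEq_sum fun i (_ : i ∈ s) => hgm i

end MeasureTheory

theorem chaos_variance_general
    {Ω E₀ : Type*} {A : Type*} {E : A → Type*}
    [MeasurableSpace Ω] [MeasurableSpace E₀] [∀ a, MeasurableSpace (E a)]
    (P : Measure Ω) [IsProbabilityMeasure P]
    (Z : Ω → E₀) (hZ : Measurable Z)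
    (X : ∀ a, Ω → E a) (hX : ∀ a, Measurable (X a))
    (p : ℕ) (hp : 1 ≤ p)
    (F : Ω → ℝ) (hF : MemLp F 2 P)
    -- the series `∑_a D_a F` converges in `L²` to `S` ...
    (S : Ω → ℝ) (hS : MemLp S 2 P)
    (hconv : Filter.Tendsto
      (fun s : Finset A => eLpNorm ((∑ a ∈ s, Dgrad P X Z a F) - S) 2 P)
      Filter.atTop (nhds 0))
    -- ... and equals `p • F` almost surely
    (hEigen : S =ᵐ[P] fun ω => (p : ℝ) * F ω) :
    (P[F | sigmaZ Z] =ᵐ[P] 0)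
    ∧ (∫ ω, F ω ∂P = 0)
    ∧ variance F P = (1 / (p : ℝ)) * ∑' a, ∫ ω, (Dgrad P X Z a F ω) ^ 2 ∂P := by
  have hZle : sigmaZ Z ≤ ‹MeasurableSpace Ω› := hZ.comap_le
  have hGle : ∀ a, Gminus X Z a ≤ ‹MeasurableSpace Ω› := fun a =>
    sup_le (iSup₂_le fun b _ => (hX b).comap_le) hZle
  have hD : ∀ a, MemLp (Dgrad P X Z a F) 2 P := fun a => hF.sub (hF.condExp one_le_two)
  have hDZ : ∀ a, P[Dgrad P X Z a F | sigmaZ Z] =ᵐ[P] 0 := fun a =>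
    condExp_sub_condExp_ae_eq_zero (m := Gminus X Z a) le_sup_right (hGle a)
      (hF.integrable one_le_two)
  have hSZ : P[S | sigmaZ Z] =ᵐ[P] 0 :=
    condExp_ae_eq_zero_of_tendsto_eLpNorm_finsetSum hD hS hDZ hconv
  have hFZ : P[F | sigmaZ Z] =ᵐ[P] 0 := by
    have hpF : P[S | sigmaZ Z] =ᵐ[P] (p : ℝ) • P[F | sigmaZ Z] :=
      (condExp_congr_ae hEigen).trans (condExp_smul (p : ℝ) F _)
    filter_upwards [hpF.symm.trans hSZ] with ω h
    simpa [show p ≠ 0 by omega] using h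
  have hmean : ∫ ω, F ω ∂P = 0 := by
    rw [← integral_condExp hZle, integral_congr_ae hFZ, Pi.zero_def, integral_zero]
  have hsum : HasSum (fun a => ∫ ω, Dgrad P X Z a F ω ^ 2 ∂P) (p * ∫ ω, F ω ^ 2 ∂P) := by
    have hFS : ∫ ω, F ω * S ω ∂P = p * ∫ ω, F ω ^ 2 ∂P := by
      rw [← integral_const_mul]
      exact integral_congr_ae (hEigen.mono fun ω hω => by simp only [hω]; ring)
    have hterm : ∀ a, ∫ ω, F ω * Dgrad P X Z a F ω ∂P = ∫ ω, Dgrad P X Z a F ω ^ 2 ∂P :=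
      fun a => integral_mul_sub_condExp (hGle a) hF
    simpa only [hFS, hterm] using hasSum_integral_mul_of_tendsto_eLpNorm hF hD hS hconv
  refine ⟨hFZ, hmean, ?_⟩
  rw [variance_eq_sub hF, hsum.tsum_eq, hmean]
  field_simp
  simp

/-- a `p`-th chaos element is centered (also conditionally on `Z`)
and its variance equals `(1/p) ∑_a E[(D_a F)²]`. -/
theorem chaos_variance
    {Ω E₀ : Type*} {A : Type*} {E : A → Type*}
    [MeasurableSpace Ω] [MeasurableSpace E₀] [∀ a, MeasurableSpace (E a)]
    [StandardBorelSpace E₀] [∀ a, StandardBorelSpace (E a)] [Countable A]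
    (P : Measure Ω) [IsProbabilityMeasure P]
    (Z : Ω → E₀) (hZ : Measurable Z)
    (X : ∀ a, Ω → E a) (hX : ∀ a, Measurable (X a))
    (hCI : CondIndep P X Z)
    (p : ℕ) (hp : 1 ≤ p)
    (F : Ω → ℝ) (hF : MemLp F 2 P)
    (hFmeas : Measurable[sigmaX X ⊔ sigmaZ Z] F)
    -- the series `∑_a D_a F` converges in `L²` to `S` ...
    (S : Ω → ℝ) (hS : MemLp S 2 P)
    (hconv : Filter.Tendsto
      (fun s : Finset A => eLpNorm ((∑ a ∈ s, Dgrad P X Z a F) - S) 2 P)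
      Filter.atTop (nhds 0))
    -- ... and equals `p • F` almost surely
    (hEigen : S =ᵐ[P] fun ω => (p : ℝ) * F ω) :
    (P[F | sigmaZ Z] =ᵐ[P] 0)
    ∧ (∫ ω, F ω ∂P = 0)
    ∧ variance F P = (1 / (p : ℝ)) * ∑' a, ∫ ω, (Dgrad P X Z a F ω) ^ 2 ∂P :=
  chaos_variance_general P Z hZ X hX p hp F hF S hS hconv hEigen
end

section
/- Assume A is finite and let p ≥ 1. Let F = ∑_{I ⊆ A, |I| = p} W_I, where each W_I = h_I(Z, (X_i)_{i∈I}) is in L⁴ and is degenerate: E[W_I | σ((X_i)_{i∈I∖\{a\}}) ∨ σ(Z)] = 0 a.s. for every a ∈ I. Then ∑_{a∈A} E[(Δ^a F)⁴] ≤ 16 p · ∑_{(I,J,K,L) connected} |E[W_I W_J W_K W_L]|, where the sum is over all ordered quadruples (I,J,K,L) of p-element subsets of A that are connected, meaning that the graph on four vertices labelled by I, J, K, L, with an edge between two labels whenever the corresponding sets intersect, is connected. -/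
open MeasureTheory ProbabilityTheory

/-- The (ordered) quadruple of sets `(I,J,K,L)` is connected: the graph on four
vertices labelled `I, J, K, L`, with an edge between two labels whenever the
corresponding sets intersect, is connected. -/
def IntersectConnected4 {A : Type*} [DecidableEq A] (I J K L : Finset A) : Prop :=
  (SimpleGraph.fromRel (fun i j : Fin 4 =>
    ((![I, J, K, L] i) ∩ (![I, J, K, L] j)).Nonempty)).Connected

/-!
Only the components `W_I` with `a ∈ I` depend on `X_a`, so `Δ^a F = S_a - S'_a`, where
`S_a = ∑_{I ∋ a} W_I` and `S'_a` is `S_a` with `X_a` replaced by `X'_a`. Conditional independence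
and equality of the conditional laws make `(Z, X)` and its resampled version identically
distributed, so `E[(Δ^a F)⁴] ≤ 8 E[S_a⁴] + 8 E[S'_a⁴] = 16 E[S_a⁴]`. Expanding the fourth power,
`E[S_a⁴]` is the sum of `E[W_I W_J W_K W_L]` over quadruples of sets containing `a`; summing over
`a` counts each quadruple `|I ∩ J ∩ K ∩ L| ≤ p` times, and a quadruple with a common point is
connected.
-/

lemma sub_pow_four_le (x y : ℝ) : (x - y) ^ 4 ≤ 8 * x ^ 4 + 8 * y ^ 4 := by
  nlinarith [sq_nonneg (x + y), sq_nonneg (x ^ 2 - y ^ 2), sq_nonneg (x * y)]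

lemma sum_pow_four {ι R : Type*} [CommSemiring R] (s : Finset ι) (f : ι → R) :
    (∑ i ∈ s, f i) ^ 4 = ∑ q ∈ s ×ˢ s ×ˢ s ×ˢ s, f q.1 * f q.2.1 * f q.2.2.1 * f q.2.2.2 := by
  rw [pow_succ', pow_succ', pow_succ', pow_one]
  simp only [Finset.sum_mul_sum]
  simp only [Finset.sum_product, Finset.mul_sum, mul_assoc]

lemma sum_sub_sum_update_eq_sum_filter_mem {A : Type*} [DecidableEq A] {E : A → Type*}
    (h : Finset A → (∀ a, E a) → ℝ)
    (hloc : ∀ (I : Finset A) (x y : ∀ a, E a), (∀ i ∈ I, x i = y i) → h I x = h I y)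
    (𝓕 : Finset (Finset A)) (x : ∀ a, E a) (a : A) (b : E a) :
    ∑ I ∈ 𝓕, h I x - ∑ I ∈ 𝓕, h I (Function.update x a b)
      = ∑ I ∈ 𝓕.filter (a ∈ ·), h I x - ∑ I ∈ 𝓕.filter (a ∈ ·), h I (Function.update x a b) := by
  simp only [← Finset.sum_sub_distrib]
  refine (Finset.sum_filter_of_ne fun I _ hne => ?_).symm
  by_contra ha
  exact hne (sub_eq_zero.mpr (hloc I _ _ fun i hi =>
    (Function.update_of_ne (fun h : i = a => ha (h ▸ hi)) _ _).symm))

section Quadruples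

variable {A : Type*} [DecidableEq A]

lemma intersectConnected4_of_inter_nonempty {I J K L : Finset A} (h : (I ∩ J ∩ K ∩ L).Nonempty) : IntersectConnected4 I J K L := by
  obtain ⟨x, hx⟩ := h
  simp only [Finset.mem_inter] at hx
  have hmem : ∀ i : Fin 4, x ∈ ![I, J, K, L] i := by
    intro i
    fin_cases i <;> simp [hx]
  refine ⟨fun u v => ?_⟩
  rcases eq_or_ne u v with rfl | huv
  · rfl
  · exact SimpleGraph.Adj.reachable
      ((SimpleGraph.fromRel_adj _ _ _).mpr ⟨huv, .inl ⟨x, Finset.mem_inter.mpr ⟨hmem u, hmem v⟩⟩⟩)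

lemma sum_sum_filter_mem_product_eq [Fintype A] {M : Type*} [AddCommMonoid M]
    (𝓕 : Finset (Finset A)) (g : Finset A × Finset A × Finset A × Finset A → M) :
    ∑ a, ∑ q ∈ 𝓕.filter (a ∈ ·) ×ˢ 𝓕.filter (a ∈ ·) ×ˢ 𝓕.filter (a ∈ ·) ×ˢ 𝓕.filter (a ∈ ·), g q
      = ∑ q ∈ 𝓕 ×ˢ 𝓕 ×ˢ 𝓕 ×ˢ 𝓕, (q.1 ∩ q.2.1 ∩ q.2.2.1 ∩ q.2.2.2).card • g q := by
  rw [Finset.sum_comm' (t' := 𝓕 ×ˢ 𝓕 ×ˢ 𝓕 ×ˢ 𝓕) (s' := fun q => q.1 ∩ q.2.1 ∩ q.2.2.1 ∩ q.2.2.2)]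
  · simp only [Finset.sum_const]
  · intro a q
    simp only [Finset.mem_univ, true_and, Finset.mem_product, Finset.mem_filter, Finset.mem_inter]
    tauto

lemma sum_sum_filter_mem_product_le_tsum_connected [Fintype A] {p : ℕ}
    (𝓕 : Finset (Finset A)) (h𝓕 : ∀ I ∈ 𝓕, I.card = p)
    (g : Finset A × Finset A × Finset A × Finset A → ℝ) (hg : ∀ q, 0 ≤ g q) :
    ∑ a, ∑ q ∈ 𝓕.filter (a ∈ ·) ×ˢ 𝓕.filter (a ∈ ·) ×ˢ 𝓕.filter (a ∈ ·) ×ˢ 𝓕.filter (a ∈ ·), g q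
      ≤ p * ∑' q : {q : Finset A × Finset A × Finset A × Finset A //
            q.1.card = p ∧ q.2.1.card = p ∧ q.2.2.1.card = p ∧ q.2.2.2.card = p ∧
            IntersectConnected4 q.1 q.2.1 q.2.2.1 q.2.2.2}, g q := by
  classical
  set 𝓠 := 𝓕 ×ˢ 𝓕 ×ˢ 𝓕 ×ˢ 𝓕
  set C := fun q : Finset A × Finset A × Finset A × Finset A =>
    q.1.card = p ∧ q.2.1.card = p ∧ q.2.2.1.card = p ∧ q.2.2.2.card = p ∧
      IntersectConnected4 q.1 q.2.1 q.2.2.1 q.2.2.2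
  have hterm : ∀ q ∈ 𝓠,
      (q.1 ∩ q.2.1 ∩ q.2.2.1 ∩ q.2.2.2).card • g q ≤ if C q then p * g q else 0 := by
    intro q hq
    simp only [𝓠, Finset.mem_product] at hq
    rcases (q.1 ∩ q.2.1 ∩ q.2.2.1 ∩ q.2.2.2).eq_empty_or_nonempty with hempty | hne
    · simp only [hempty, Finset.card_empty, zero_smul]
      split_ifs
      exacts [mul_nonneg p.cast_nonneg (hg q), le_rfl]
    · have hcard : (q.1 ∩ q.2.1 ∩ q.2.2.1 ∩ q.2.2.2).card ≤ p :=
        (Finset.card_le_card (by intro x; simp +contextual)).trans_eq (h𝓕 _ hq.1)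
      rw [if_pos ⟨h𝓕 _ hq.1, h𝓕 _ hq.2.1, h𝓕 _ hq.2.2.1, h𝓕 _ hq.2.2.2,
        intersectConnected4_of_inter_nonempty hne⟩, nsmul_eq_mul]
      exact mul_le_mul_of_nonneg_right (by exact_mod_cast hcard) (hg q)
  calc _ = ∑ q ∈ 𝓠, (q.1 ∩ q.2.1 ∩ q.2.2.1 ∩ q.2.2.2).card • g q :=
        sum_sum_filter_mem_product_eq 𝓕 g
    _ ≤ ∑ q ∈ 𝓠, if C q then p * g q else 0 := Finset.sum_le_sum hterm
    _ = p * ∑ q ∈ 𝓠.subtype C, g q := by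
        rw [← Finset.sum_filter, Finset.sum_subtype_eq_sum_filter, Finset.mul_sum]
    _ ≤ p * ∑' q : Subtype C, g q := by
        gcongr
        exact Summable.sum_le_tsum _ (fun q _ => hg q) .of_finite

end Quadruples

section FourthMoments

variable {Ω : Type*} [MeasurableSpace Ω] {μ : Measure Ω}

lemma MeasureTheory.MemLp.integrable_mul_mul_mul {f g h k : Ω → ℝ} (hf : MemLp f 4 μ)
    (hg : MemLp g 4 μ) (hh : MemLp h 4 μ) (hk : MemLp k 4 μ) :
    Integrable (fun ω => f ω * g ω * h ω * k ω) μ := by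
  have : ENNReal.HolderTriple 4 4 2 := ⟨by
    rw [← ENNReal.add_halves 2⁻¹, ENNReal.div_eq_inv_mul, ← ENNReal.mul_inv (by simp) (by simp)]
    norm_num⟩
  have hfghk : MemLp (fun ω => (f ω * g ω) * (h ω * k ω)) 1 μ :=
    (hk.mul' hh (r := 2)).mul' (hg.mul' hf (r := 2))
  exact (memLp_one_iff_integrable.mp hfghk).congr (.of_forall fun ω => by ring)

lemma integral_sum_pow_four {ι : Type*} (s : Finset ι) {W : ι → Ω → ℝ}
    (hW : ∀ i ∈ s, MemLp (W i) 4 μ) :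
    ∫ ω, (∑ i ∈ s, W i ω) ^ 4 ∂μ
      = ∑ q ∈ s ×ˢ s ×ˢ s ×ˢ s, ∫ ω, W q.1 ω * W q.2.1 ω * W q.2.2.1 ω * W q.2.2.2 ω ∂μ := by
  simp_rw [sum_pow_four]
  refine integral_finsetSum _ fun q hq => ?_
  simp only [Finset.mem_product] at hq
  exact (hW _ hq.1).integrable_mul_mul_mul (hW _ hq.2.1) (hW _ hq.2.2.1) (hW _ hq.2.2.2)

lemma integral_sub_pow_four_le_of_identDistrib {f g : Ω → ℝ} (hf : MemLp f 4 μ)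
    (hfg : IdentDistrib f g μ μ) :
    ∫ ω, (f ω - g ω) ^ 4 ∂μ ≤ 16 * ∫ ω, f ω ^ 4 ∂μ := by
  have hfg4 : IdentDistrib (fun ω => f ω ^ 4) (fun ω => g ω ^ 4) μ μ :=
    hfg.comp (measurable_id.pow_const 4)
  have hf4 : Integrable (fun ω => f ω ^ 4) μ :=
    (hf.integrable_mul_mul_mul hf hf hf).congr (.of_forall fun ω => by ring)
  have hg4 : Integrable (fun ω => g ω ^ 4) μ := hfg4.integrable_snd hf4
  calc ∫ ω, (f ω - g ω) ^ 4 ∂μ ≤ ∫ ω, 8 * f ω ^ 4 + 8 * g ω ^ 4 ∂μ :=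
        integral_mono_of_nonneg (.of_forall fun ω => by positivity)
          ((hf4.const_mul 8).add (hg4.const_mul 8)) (.of_forall fun ω => sub_pow_four_le _ _)
    _ = 16 * ∫ ω, f ω ^ 4 ∂μ := by
        rw [integral_add (hf4.const_mul 8) (hg4.const_mul 8), integral_const_mul,
          integral_const_mul, ← hfg4.integral_eq]
        ring

end FourthMoments

section Resampling

variable {Ω E₀ : Type*} [MeasurableSpace E₀]

section Gminus

variable {B : Type*} {G : B → Type*} [∀ b, MeasurableSpace (G b)] {Y : ∀ b, Ω → G b}
  {Z : Ω → E₀}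

lemma measurableSet_gminus_preimage {b c : B} (hbc : b ≠ c) {t : Set (G b)}
    (ht : MeasurableSet t) : MeasurableSet[Gminus Y Z c] (Y b ⁻¹' t) :=
  le_sup_left.trans'
    (le_iSup₂ (f := fun b (_ : b ≠ c) => MeasurableSpace.comap (Y b) inferInstance) b hbc)
    _ ⟨t, ht, rfl⟩

lemma measurableSet_gminus_preimage_latent (c : B) {s : Set E₀} (hs : MeasurableSet s) :
    MeasurableSet[Gminus Y Z c] (Z ⁻¹' s) :=
  (le_sup_right : sigmaZ Z ≤ Gminus Y Z c) _ ⟨s, hs, rfl⟩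

lemma gminus_le [mΩ : MeasurableSpace Ω] (hY : ∀ b, Measurable (Y b)) (hZ : Measurable Z)
    (c : B) : Gminus Y Z c ≤ mΩ :=
  sup_le (iSup₂_le fun b _ => (hY b).comap_le) hZ.comap_le

end Gminus

variable [mΩ : MeasurableSpace Ω]

lemma measureReal_inter_eq_setIntegral_condExp {P : Measure Ω} [IsFiniteMeasure P]
    {m : MeasurableSpace Ω} (hm : m ≤ mΩ) {D s : Set Ω} (hD : MeasurableSet[m] D)
    (hs : MeasurableSet[mΩ] s) :
    P.real (D ∩ s) = ∫ ω in D, (P[s.indicator (fun _ => (1 : ℝ)) | m]) ω ∂P := by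
  rw [setIntegral_condExp hm ((integrable_const (1 : ℝ)).indicator hs) hD, integral_indicator hs,
    setIntegral_const, smul_eq_mul, mul_one, measureReal_restrict_apply hs, Set.inter_comm]

variable {A : Type*} {E : A → Type*} [∀ a, MeasurableSpace (E a)] {P : Measure Ω}
  [IsFiniteMeasure P] {Z : Ω → E₀} {X X' : ∀ a, Ω → E a}

lemma measureReal_inter_preimage_resample_eq (hZ : Measurable Z) (hX : ∀ a, Measurable (X a))
    (hX' : ∀ a, Measurable (X' a)) (hCI : CondIndep P (pairX X X') Z)
    (hLaw : SameCondLaw P X X' Z) (a : A) {D : Set Ω}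
    (hD₁ : MeasurableSet[Gminus (pairX X X') Z (.inl a)] D)
    (hD₂ : MeasurableSet[Gminus (pairX X X') Z (.inr a)] D) {u : Set (E a)}
    (hu : MeasurableSet u) :
    P.real (D ∩ X' a ⁻¹' u) = P.real (D ∩ X a ⁻¹' u) := by
  have hpair : ∀ s, Measurable (pairX X X' s)
    | .inl b => hX b
    | .inr b => hX' b
  rw [measureReal_inter_eq_setIntegral_condExp (gminus_le hpair hZ (.inr a)) hD₂ (hX' a hu),
    measureReal_inter_eq_setIntegral_condExp (gminus_le hpair hZ (.inl a)) hD₁ (hX a hu)]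
  exact integral_congr_ae <| ae_restrict_of_ae <|
    (hCI (.inr a) u hu).trans ((hLaw a u hu).symm.trans (hCI (.inl a) u hu).symm)

theorem identDistrib_update_resample [Finite A] [DecidableEq A] (hZ : Measurable Z)
    (hX : ∀ a, Measurable (X a)) (hX' : ∀ a, Measurable (X' a))
    (hCI : CondIndep P (pairX X X') Z) (hLaw : SameCondLaw P X X' Z) (a : A) :
    IdentDistrib (fun ω => (Z ω, Xvec X ω))
      (fun ω => (Z ω, Function.update (Xvec X ω) a (X' a ω))) P P := by
  have hXvec : Measurable (Xvec X) := measurable_pi_lambda _ hX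
  have hT' : Measurable fun ω => (Z ω, Function.update (Xvec X ω) a (X' a ω)) :=
    hZ.prodMk (measurable_update'.comp (hXvec.prodMk (hX' a)))
  refine ⟨(hZ.prodMk hXvec).aemeasurable, hT'.aemeasurable, ?_⟩
  refine ext_of_generate_finite _
    ((generateFrom_eq_prod MeasurableSpace.generateFrom_measurableSet generateFrom_pi
      isCountablySpanning_measurableSet
      (IsCountablySpanning.pi fun _ => isCountablySpanning_measurableSet)).symm)
    (MeasurableSpace.isPiSystem_measurableSet.prod isPiSystem_pi) ?_ ?_
  swap
  · rw [Measure.map_apply (hZ.prodMk hXvec) .univ, Measure.map_apply hT' .univ]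
    rfl
  rintro _ ⟨s₀, hs₀, _, ⟨t, ht, rfl⟩, rfl⟩
  simp only [Set.mem_ofPred_eq, Set.mem_pi, Set.mem_univ, forall_const] at hs₀ ht
  set D := Z ⁻¹' s₀ ∩ ⋂ i, ⋂ (_ : i ≠ a), X i ⁻¹' t i
  have hD : ∀ c : A ⊕ A, (∀ i ≠ a, .inl i ≠ c) → MeasurableSet[Gminus (pairX X X') Z c] D :=
    fun c hc => (measurableSet_gminus_preimage_latent c hs₀).inter <|
      .iInter fun i => .iInter fun hi => measurableSet_gminus_preimage (hc i hi) (ht i)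
  have hpre : (fun ω => (Z ω, Xvec X ω)) ⁻¹' s₀ ×ˢ Set.univ.pi t = D ∩ X a ⁻¹' t a := by
    ext ω
    simp [D, Xvec, ← and_forall_ne a (p := fun i => X i ω ∈ t i)]
    tauto
  have hpre' : (fun ω => (Z ω, Function.update (Xvec X ω) a (X' a ω))) ⁻¹' s₀ ×ˢ Set.univ.pi t
      = D ∩ X' a ⁻¹' t a := by
    ext ω
    simp [D, Function.forall_update_iff _ (fun i x => x ∈ t i)]
    tauto
  have hrect := (hs₀.prod (MeasurableSet.univ_pi ht))
  rw [Measure.map_apply (hZ.prodMk hXvec) hrect, Measure.map_apply hT' hrect, hpre, hpre',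
    ← measureReal_eq_measureReal_iff, measureReal_inter_preimage_resample_eq hZ hX hX' hCI hLaw a
      (hD _ fun i hi h => hi (Sum.inl_injective h)) (hD _ fun i _ => Sum.inl_ne_inr) (ht a)]

theorem integral_sub_update_pow_four_le [Finite A] [DecidableEq A] (hZ : Measurable Z)
    (hX : ∀ a, Measurable (X a)) (hX' : ∀ a, Measurable (X' a))
    (hCI : CondIndep P (pairX X X') Z) (hLaw : SameCondLaw P X X' Z)
    {ψ : E₀ × (∀ a, E a) → ℝ} (hψ : Measurable ψ)
    (hψ4 : MemLp (fun ω => ψ (Z ω, Xvec X ω)) 4 P) (a : A) :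
    ∫ ω, (ψ (Z ω, Xvec X ω) - ψ (Z ω, Function.update (Xvec X ω) a (X' a ω))) ^ 4 ∂P
      ≤ 16 * ∫ ω, ψ (Z ω, Xvec X ω) ^ 4 ∂P :=
  integral_sub_pow_four_le_of_identDistrib hψ4
    ((identDistrib_update_resample hZ hX hX' hCI hLaw a).comp hψ)

theorem integral_sub_update_sum_pow_four_le [Finite A] [DecidableEq A] (hZ : Measurable Z)
    (hX : ∀ a, Measurable (X a)) (hX' : ∀ a, Measurable (X' a))
    (hCI : CondIndep P (pairX X X') Z) (hLaw : SameCondLaw P X X' Z)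
    {h : Finset A → E₀ → (∀ a, E a) → ℝ}
    (hmeas : ∀ I, Measurable (fun q : E₀ × (∀ a, E a) => h I q.1 q.2))
    (hloc : ∀ (I : Finset A) (z : E₀) (x y : ∀ a, E a), (∀ i ∈ I, x i = y i) → h I z x = h I z y)
    {𝓕 : Finset (Finset A)} (h4 : ∀ I ∈ 𝓕, MemLp (fun ω => h I (Z ω) (Xvec X ω)) 4 P) (a : A) :
    ∫ ω, (∑ I ∈ 𝓕, h I (Z ω) (Xvec X ω)
        - ∑ I ∈ 𝓕, h I (Z ω) (Function.update (Xvec X ω) a (X' a ω))) ^ 4 ∂P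
      ≤ 16 * ∑ q ∈ 𝓕.filter (a ∈ ·) ×ˢ 𝓕.filter (a ∈ ·) ×ˢ 𝓕.filter (a ∈ ·) ×ˢ 𝓕.filter (a ∈ ·),
        |∫ ω, h q.1 (Z ω) (Xvec X ω) * h q.2.1 (Z ω) (Xvec X ω) * h q.2.2.1 (Z ω) (Xvec X ω)
          * h q.2.2.2 (Z ω) (Xvec X ω) ∂P| := by
  have h4a : ∀ I ∈ 𝓕.filter (a ∈ ·), MemLp (fun ω => h I (Z ω) (Xvec X ω)) 4 P :=
    fun I hI => h4 I (Finset.mem_of_mem_filter I hI)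
  simp_rw [sum_sub_sum_update_eq_sum_filter_mem (h · (Z _)) (fun I => hloc I (Z _)) 𝓕]
  calc _ ≤ 16 * ∫ ω, (∑ I ∈ 𝓕.filter (a ∈ ·), h I (Z ω) (Xvec X ω)) ^ 4 ∂P :=
        integral_sub_update_pow_four_le hZ hX hX' hCI hLaw (ψ := fun z => ∑ I ∈ _, h I z.1 z.2)
          (Finset.measurable_sum _ fun I _ => hmeas I) (memLp_finsetSum _ h4a) a
    _ ≤ _ := by
        rw [integral_sum_pow_four _ h4a]
        gcongr with q
        exact le_abs_self _

end Resampling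

theorem fourth_difference_connected_bound_general
    {Ω E₀ : Type*} {A : Type*} {E : A → Type*}
    [MeasurableSpace Ω] [MeasurableSpace E₀] [∀ a, MeasurableSpace (E a)]
    [Fintype A] [DecidableEq A]
    (P : Measure Ω) [IsProbabilityMeasure P]
    (Z : Ω → E₀) (hZ : Measurable Z)
    (X X' : ∀ a, Ω → E a) (hX : ∀ a, Measurable (X a)) (hX' : ∀ a, Measurable (X' a))
    (hCI : CondIndep P (pairX X X') Z)
    (hLaw : SameCondLaw P X X' Z)
    (p : ℕ)
    -- the kernels h_I(z, x), each depending only on the coordinates in I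
    (hI : Finset A → E₀ → (∀ a, E a) → ℝ)
    (hImeas : ∀ I, Measurable (fun q : E₀ × (∀ a, E a) => hI I q.1 q.2))
    (hIlocal : ∀ (I : Finset A) (z : E₀) (x y : ∀ a, E a),
      (∀ i ∈ I, x i = y i) → hI I z x = hI I z y)
    -- the components W_I = h_I(Z, (X_i)_{i ∈ I})
    (W : Finset A → Ω → ℝ)
    (hW : W = fun I ω => hI I (Z ω) (Xvec X ω))
    (hW4 : ∀ I : Finset A, I.card = p → MemLp (W I) 4 P)
    -- F = ∑_{|I| = p} W_I
    (F : Ω → ℝ)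
    (hF : F = fun ω =>
      ∑ I ∈ Finset.univ.powerset.filter (fun I : Finset A => I.card = p), W I ω)
    -- the version of F with the a-th coordinate resampled
    (Frep : A → Ω → ℝ)
    (hFrep : Frep = fun a ω =>
      ∑ I ∈ Finset.univ.powerset.filter (fun I : Finset A => I.card = p),
        hI I (Z ω) (Function.update (Xvec X ω) a (X' a ω))) :
    ∑ a, ∫ ω, (F ω - Frep a ω) ^ 4 ∂P
      ≤ 16 * (p : ℝ)
        * ∑' q : {q : Finset A × Finset A × Finset A × Finset A //
            q.1.card = p ∧ q.2.1.card = p ∧ q.2.2.1.card = p ∧ q.2.2.2.card = p ∧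
            IntersectConnected4 q.1 q.2.1 q.2.2.1 q.2.2.2},
          |∫ ω, W q.val.1 ω * W q.val.2.1 ω * W q.val.2.2.1 ω * W q.val.2.2.2 ω ∂P| := by
  subst hW hF hFrep
  calc _ ≤ ∑ a, 16 * ∑ q ∈ _ ×ˢ _ ×ˢ _ ×ˢ _, _ := Finset.sum_le_sum fun a _ =>
        integral_sub_update_sum_pow_four_le hZ hX hX' hCI hLaw hImeas hIlocal
          (fun I hI => hW4 I (Finset.mem_filter.mp hI).2) a
    _ ≤ _ := by
      rw [← Finset.mul_sum, mul_assoc]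
      gcongr
      exact sum_sum_filter_mem_product_le_tsum_connected _ (fun I hI => (Finset.mem_filter.mp hI).2)
        _ fun _ => abs_nonneg _

/-- fourth-power difference bound for degenerate U-statistics by
the sum over connected quadruples. -/
theorem fourth_difference_connected_bound
    {Ω E₀ : Type*} {A : Type*} {E : A → Type*}
    [MeasurableSpace Ω] [MeasurableSpace E₀] [∀ a, MeasurableSpace (E a)]
    [StandardBorelSpace E₀] [∀ a, StandardBorelSpace (E a)] [Fintype A] [DecidableEq A]
    (P : Measure Ω) [IsProbabilityMeasure P]
    (Z : Ω → E₀) (hZ : Measurable Z)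
    (X X' : ∀ a, Ω → E a) (hX : ∀ a, Measurable (X a)) (hX' : ∀ a, Measurable (X' a))
    (hCI : CondIndep P (pairX X X') Z)
    (hLaw : SameCondLaw P X X' Z)
    (p : ℕ) (hp : 1 ≤ p)
    -- the kernels h_I(z, x), each depending only on the coordinates in I
    (hI : Finset A → E₀ → (∀ a, E a) → ℝ)
    (hImeas : ∀ I, Measurable (fun q : E₀ × (∀ a, E a) => hI I q.1 q.2))
    (hIlocal : ∀ (I : Finset A) (z : E₀) (x y : ∀ a, E a),
      (∀ i ∈ I, x i = y i) → hI I z x = hI I z y)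
    -- the components W_I = h_I(Z, (X_i)_{i ∈ I})
    (W : Finset A → Ω → ℝ)
    (hW : W = fun I ω => hI I (Z ω) (Xvec X ω))
    (hW4 : ∀ I : Finset A, I.card = p → MemLp (W I) 4 P)
    -- degeneracy
    (hdeg : ∀ I : Finset A, I.card = p → ∀ a ∈ I,
      (P[W I | sigmaSub X Z (I.erase a)]) =ᵐ[P] 0)
    -- F = ∑_{|I| = p} W_I
    (F : Ω → ℝ)
    (hF : F = fun ω =>
      ∑ I ∈ Finset.univ.powerset.filter (fun I : Finset A => I.card = p), W I ω)
    -- the version of F with the a-th coordinate resampled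
    (Frep : A → Ω → ℝ)
    (hFrep : Frep = fun a ω =>
      ∑ I ∈ Finset.univ.powerset.filter (fun I : Finset A => I.card = p),
        hI I (Z ω) (Function.update (Xvec X ω) a (X' a ω))) :
    ∑ a, ∫ ω, (F ω - Frep a ω) ^ 4 ∂P
      ≤ 16 * (p : ℝ)
        * ∑' q : {q : Finset A × Finset A × Finset A × Finset A //
            q.1.card = p ∧ q.2.1.card = p ∧ q.2.2.1.card = p ∧ q.2.2.2.card = p ∧
            IntersectConnected4 q.1 q.2.1 q.2.2.1 q.2.2.2},
          |∫ ω, W q.val.1 ω * W q.val.2.1 ω * W q.val.2.2.1 ω * W q.val.2.2.2 ω ∂P| :=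
  fourth_difference_connected_bound_general P Z hZ X X' hX hX' hCI hLaw p hI hImeas hIlocal W hW hW4
    F hF Frep hFrep
end
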